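/- arXiv:1511.01209 — 6 statements merged into one kernel-verified Lean document; each statement's English description precedes it below -/
import Mathlib

section
/- Let K ≥ 4 and let f = [z1,z2,z3,z4] be a simple K-round quadrilateral in ℂ. Then each of the four edges of f has length at least diam(f)/(2K). -/
open Complex Set MeasureTheory Filter
open scoped Classical ENNReal

noncomputable section

/-- A quadrilateral face `[z1 z2 z3 z4]` given by its four vertices in `ℂ`. -/
structure Quad where
  z1 : ℂ
  z2 : ℂ
  z3 : ℂ
  z4 : ℂ

namespace Quad

/-- The set of the four vertices of the face. -/
def vertexSet (q : Quad) : Set ℂ := {q.z1, q.z2, q.z3, q.z4}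

/-- The four edges of the face, as segments. -/
def edges (q : Quad) : Set (Set ℂ) :=
  {segment ℝ q.z1 q.z2, segment ℝ q.z2 q.z3, segment ℝ q.z3 q.z4, segment ℝ q.z4 q.z1}

/-- The four vertices are pairwise distinct. -/
def Distinct (q : Quad) : Prop :=
  q.z1 ≠ q.z2 ∧ q.z1 ≠ q.z3 ∧ q.z1 ≠ q.z4 ∧ q.z2 ≠ q.z3 ∧ q.z2 ≠ q.z4 ∧ q.z3 ≠ q.z4

/-- The face is simple: vertices pairwise distinct, and two edges meet only when
consecutive, and then only at their shared endpoint. -/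
def Simple (q : Quad) : Prop :=
  q.Distinct ∧
  segment ℝ q.z1 q.z2 ∩ segment ℝ q.z2 q.z3 = {q.z2} ∧
  segment ℝ q.z2 q.z3 ∩ segment ℝ q.z3 q.z4 = {q.z3} ∧
  segment ℝ q.z3 q.z4 ∩ segment ℝ q.z4 q.z1 = {q.z4} ∧
  segment ℝ q.z4 q.z1 ∩ segment ℝ q.z1 q.z2 = {q.z1} ∧
  segment ℝ q.z1 q.z2 ∩ segment ℝ q.z3 q.z4 = ∅ ∧
  segment ℝ q.z2 q.z3 ∩ segment ℝ q.z4 q.z1 = ∅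

/-- The maximal distance between two of the four vertices. -/
def diam (q : Quad) : ℝ := Metric.diam q.vertexSet

/-- The lengths of the four edges. -/
def edgeLen (q : Quad) : Fin 4 → ℝ
  | 0 => dist q.z1 q.z2
  | 1 => dist q.z2 q.z3
  | 2 => dist q.z3 q.z4
  | 3 => dist q.z4 q.z1

/-- `K`-roundness: all four unsigned vertex angles are at least `2π/K`, and the ratio of
the lengths of any two edges is at most `K`. -/
def KRound (q : Quad) (K : ℝ) : Prop :=
  2 * Real.pi / K ≤ EuclideanGeometry.angle q.z4 q.z1 q.z2 ∧
  2 * Real.pi / K ≤ EuclideanGeometry.angle q.z1 q.z2 q.z3 ∧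
  2 * Real.pi / K ≤ EuclideanGeometry.angle q.z2 q.z3 q.z4 ∧
  2 * Real.pi / K ≤ EuclideanGeometry.angle q.z3 q.z4 q.z1 ∧
  ∀ i j : Fin 4, q.edgeLen i ≤ K * q.edgeLen j

/-- The diagonals of the face are orthogonal. -/
def Orthogonal (q : Quad) : Prop :=
  ((starRingEnd ℂ) (q.z3 - q.z1) * (q.z4 - q.z2)).re = 0

/-- The diagonal `[z1,z3]` is interior: its open segment is disjoint from the four edges. -/
def DiagInterior13 (q : Quad) : Prop :=
  ∀ e ∈ q.edges, openSegment ℝ q.z1 q.z3 ∩ e = ∅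

/-- The region of the face: the union of the two triangles obtained by cutting along an
interior diagonal. -/
def region (q : Quad) : Set ℂ :=
  if q.DiagInterior13 then
    convexHull ℝ {q.z1, q.z2, q.z3} ∪ convexHull ℝ {q.z1, q.z3, q.z4}
  else
    convexHull ℝ {q.z2, q.z3, q.z4} ∪ convexHull ℝ {q.z2, q.z4, q.z1}

/-- The area of the face: the Lebesgue measure of its region. -/
def area (q : Quad) : ℝ := (volume q.region).toReal

/-- `v` is the discrete gradient of `u` on the (orthogonal) face `q`:
`v ⊙ (z3 − z1) = u z3 − u z1` and `v ⊙ (z4 − z2) = u z4 − u z2`. -/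
def IsDiscreteGrad (q : Quad) (u : ℂ → ℝ) (v : ℂ) : Prop :=
  ((starRingEnd ℂ) v * (q.z3 - q.z1)).re = u q.z3 - u q.z1 ∧
  ((starRingEnd ℂ) v * (q.z4 - q.z2)).re = u q.z4 - u q.z2

/-- The contribution of the face `q` to the discrete Laplacian of `u` at a vertex `ζ`
(after cyclic relabeling so that the first vertex is `ζ`). -/
def lapTerm (q : Quad) (u : ℂ → ℝ) (ζ : ℂ) : ℝ :=
  if ζ = q.z1 then dist q.z2 q.z4 / dist q.z1 q.z3 * (u q.z3 - u q.z1)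
  else if ζ = q.z2 then dist q.z1 q.z3 / dist q.z2 q.z4 * (u q.z4 - u q.z2)
  else if ζ = q.z3 then dist q.z2 q.z4 / dist q.z1 q.z3 * (u q.z1 - u q.z3)
  else if ζ = q.z4 then dist q.z1 q.z3 / dist q.z2 q.z4 * (u q.z2 - u q.z4)
  else 0

end Quad

/-- A quadrilateral lattice: a finite nonempty collection of simple quadrilateral faces with
pairwise disjoint interiors, intersecting only in common vertices or common edges, each edge
on at most two faces, whose union is connected and simply connected. -/
structure QuadLattice where
  faces : Finset Quad
  faces_nonempty : faces.Nonempty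
  faces_simple : ∀ f ∈ faces, f.Simple
  interiors_disjoint : ∀ f ∈ faces, ∀ g ∈ faces, f ≠ g →
    interior f.region ∩ interior g.region = ∅
  region_inter : ∀ f ∈ faces, ∀ g ∈ faces, f ≠ g →
    f.region ∩ g.region = ∅ ∨
    (∃ v, v ∈ f.vertexSet ∧ v ∈ g.vertexSet ∧ f.region ∩ g.region = {v}) ∨
    (∃ e, e ∈ f.edges ∧ e ∈ g.edges ∧ f.region ∩ g.region = e)
  edge_le_two_faces : ∀ f ∈ faces, ∀ e ∈ f.edges,
    ({g : Quad | g ∈ faces ∧ e ∈ g.edges}).ncard ≤ 2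
  support_connected : IsConnected (⋃ f ∈ faces, f.region)
  support_simplyConnected : SimplyConnectedSpace (⋃ f ∈ faces, f.region)

namespace QuadLattice

/-- The union of the regions of all faces. -/
def support (Q : QuadLattice) : Set ℂ := ⋃ f ∈ Q.faces, f.region

/-- The set `Q*` of all vertices of the lattice. -/
def verts (Q : QuadLattice) : Set ℂ := ⋃ f ∈ Q.faces, f.vertexSet

/-- The boundary `∂Q`: the union of all edges belonging to exactly one face. -/
def boundary (Q : QuadLattice) : Set ℂ :=
  ⋃₀ {e | (∃ f ∈ Q.faces, e ∈ f.edges) ∧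
      ({g : Quad | g ∈ Q.faces ∧ e ∈ g.edges}).ncard = 1}

/-- `M(Q)`: the maximal edge length of the lattice. -/
def M (Q : QuadLattice) : ℝ :=
  sSup {r : ℝ | ∃ f ∈ Q.faces, ∃ i : Fin 4, r = f.edgeLen i}

/-- All faces of the lattice are `K`-round. -/
def KRound (Q : QuadLattice) (K : ℝ) : Prop := ∀ f ∈ Q.faces, f.KRound K

/-- All faces of the lattice have orthogonal diagonals. -/
def Orthogonal (Q : QuadLattice) : Prop := ∀ f ∈ Q.faces, f.Orthogonal

/-- `black` is a black/white two-coloring of the vertices: in every face the two diagonal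
pairs receive opposite colors. -/
def IsColoring (Q : QuadLattice) (black : ℂ → Prop) : Prop :=
  ∀ f ∈ Q.faces, (black f.z1 ↔ black f.z3) ∧ (black f.z2 ↔ black f.z4) ∧
    (black f.z1 ↔ ¬ black f.z2)

/-- The discrete Laplacian of `u` at the point `ζ`. -/
def lap (Q : QuadLattice) (u : ℂ → ℝ) (ζ : ℂ) : ℝ :=
  ∑ f ∈ Q.faces, f.lapTerm u ζ

/-- `u` is discrete harmonic: its discrete Laplacian vanishes at every interior vertex. -/
def DiscreteHarmonic (Q : QuadLattice) (u : ℂ → ℝ) : Prop :=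
  ∀ ζ ∈ Q.verts, ζ ∉ Q.boundary → Q.lap u ζ = 0

/-- The maximum of `|u z' − u w'|` over pairs of vertices of `Q` lying on `∂Q` within
distance `r` of `c` (zero if there are no such vertices). -/
def bdryOsc (Q : QuadLattice) (u : ℂ → ℝ) (c : ℂ) (r : ℝ) : ℝ :=
  sSup (insert 0 {d : ℝ | ∃ z' ∈ Q.verts ∩ Q.boundary, ∃ w' ∈ Q.verts ∩ Q.boundary,
    dist z' c ≤ r ∧ dist w' c ≤ r ∧ d = |u z' - u w'|})

end QuadLattice

/-- A sequence of quadrilateral lattices approximates a bounded domain `Ω` if the maximal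
edge lengths tend to `0` and the Hausdorff distance between `∂Qₙ` and `∂Ω` tends to `0`. -/
def Approximates (Q : ℕ → QuadLattice) (Ω : Set ℂ) : Prop :=
  Tendsto (fun n => (Q n).M) atTop (nhds 0) ∧
  Tendsto (fun n => Metric.hausdorffDist ((Q n).boundary) (frontier Ω)) atTop (nhds 0)

/-- The signed (shoelace) area of the quadrilateral `abcd`. -/
def signedArea (a b c d : ℂ) : ℝ :=
  (1 / 2) * ((starRingEnd ℂ) a * b + (starRingEnd ℂ) b * c +
    (starRingEnd ℂ) c * d + (starRingEnd ℂ) d * a).im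

/-- The continuous Laplacian `Δg = D²g(1,1) + D²g(i,i)` of `g : ℂ → ℝ`. -/
def lapCont (g : ℂ → ℝ) (z : ℂ) : ℝ :=
  iteratedFDeriv ℝ 2 g z ![1, 1] + iteratedFDeriv ℝ 2 g z ![Complex.I, Complex.I]

/-- The closed axis-parallel square `[a, a+r] × [b, b+r]` in `ℂ`. -/
def sqSet (a b r : ℝ) : Set ℂ :=
  {z : ℂ | z.re ∈ Set.Icc a (a + r) ∧ z.im ∈ Set.Icc b (b + r)}

end

theorem Metric.diam_quadruple_le {α : Type*} [PseudoMetricSpace α] {a b c d : α} {M : ℝ}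
    (hab : dist a b ≤ M) (hbc : dist b c ≤ M) (hcd : dist c d ≤ M) (hda : dist d a ≤ M) :
    Metric.diam ({a, b, c, d} : Set α) ≤ 2 * M := by
  have hM : 0 ≤ M := dist_nonneg.trans hab
  have hac : dist a c ≤ 2 * M := (dist_triangle a b c).trans (by linarith)
  have hbd : dist b d ≤ 2 * M := (dist_triangle b c d).trans (by linarith)
  refine Metric.diam_le_of_forall_dist_le (by positivity) ?_
  simp only [Set.mem_insert_iff, Set.mem_singleton_iff]
  rintro x (rfl | rfl | rfl | rfl) y (rfl | rfl | rfl | rfl) <;>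
    simp only [dist_self, dist_comm] at * <;> linarith

namespace Quad

theorem diam_le_two_mul {q : Quad} {M : ℝ} (h : ∀ i, q.edgeLen i ≤ M) : q.diam ≤ 2 * M :=
  Metric.diam_quadruple_le (h 0) (h 1) (h 2) (h 3)

theorem KRound.edgeLen_le {q : Quad} {K : ℝ} (hr : q.KRound K) (i j : Fin 4) :
    q.edgeLen i ≤ K * q.edgeLen j :=
  hr.2.2.2.2 i j

end Quad

theorem edge_length_lower_bound_general (K : ℝ) (hK : 4 ≤ K) (q : Quad)
    (hr : q.KRound K) :
    ∀ i : Fin 4, q.diam / (2 * K) ≤ q.edgeLen i := by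
  intro i
  have hdiam : q.diam ≤ 2 * (K * q.edgeLen i) :=
    Quad.diam_le_two_mul fun j => hr.edgeLen_le j i
  rw [div_le_iff₀ (by linarith)]
  linarith

/-- Every edge of a simple `K`-round quadrilateral has length at least
`diam(f)/(2K)`. -/
theorem edge_length_lower_bound (K : ℝ) (hK : 4 ≤ K) (q : Quad)
    (hs : q.Simple) (hr : q.KRound K) :
    ∀ i : Fin 4, q.diam / (2 * K) ≤ q.edgeLen i :=
  edge_length_lower_bound_general K hK q hr
end

section
/- For every K ≥ 4 there exists a constant C_K > 0, depending only on K, such that every simple K-round quadrilateral f = [z1,z2,z3,z4] in ℂ whose diagonal [z1,z3] is interior satisfies area(f) ≥ C_K · diam(f)², where area(f) is the 2-dimensional Lebesgue measure of the region of f. -/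
open Complex Set MeasureTheory Filter
open scoped Classical ENNReal

/-! The diagonal `[z1,z3]` splits the angle at `z1`, which is at least `2π/K`, so one of its two
parts is at least `π/K`; say it lies in the triangle `z1 z2 z3` (otherwise use `z1 z3 z4`). The
angle at `z2` is then at least `2π/K` and at most `π - π/K`, so its sine is at least `sin (π/K)`,
and by the edge ratio bound both edges at `z2` have length at least `diam/(2K)`. The triangle lies
in the region and contains the parallelogram spanned by the halves of these two edges, whose area
is `sin (∠ z1 z2 z3) · |z1 - z2| · |z3 - z2| / 4 ≥ sin (π/K) · diam² / (16 K²)`. -/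

theorem Real.sin_le_sin_of_le_of_le_pi_sub {δ x : ℝ} (hδ : 0 ≤ δ) (h₁ : δ ≤ x)
    (h₂ : x ≤ Real.pi - δ) : Real.sin δ ≤ Real.sin x := by
  rcases le_total x (Real.pi / 2) with hx | hx
  · exact Real.sin_le_sin_of_le_of_le_pi_div_two (by linarith [Real.pi_pos]) hx h₁
  · rw [← Real.sin_pi_sub x]
    exact Real.sin_le_sin_of_le_of_le_pi_div_two (by linarith [Real.pi_pos]) (by linarith)
      (by linarith)

section Triangle

variable {E : Type*}

theorem add_smul_sub_add_smul_sub_mem_convexHull [AddCommGroup E] [Module ℝ E]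
    {p q r : E} {s t : ℝ} (hs : 0 ≤ s) (ht : 0 ≤ t) (hst : s + t ≤ 1) :
    p + (s • (q - p) + t • (r - p)) ∈ convexHull ℝ {p, q, r} := by
  have h := (convex_convexHull ℝ ({p, q, r} : Set E)).sum_mem (t := Finset.univ)
    (w := ![1 - s - t, s, t]) (z := ![p, q, r])
    (by intro i _; fin_cases i <;> simp <;> linarith) (by simp [Fin.sum_univ_three]; ring)
    (by intro i _; fin_cases i <;> apply subset_convexHull <;> simp)
  convert h using 1
  simp [Fin.sum_univ_three]
  module

open Pointwise in
theorem vadd_half_smul_parallelepiped_subset_convexHull [AddCommGroup E] [Module ℝ E]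
    (p q r : E) :
    p +ᵥ (2⁻¹ : ℝ) • parallelepiped ![q - p, r - p] ⊆ convexHull ℝ {p, q, r} := by
  rintro _ ⟨_, ⟨x, hx, rfl⟩, rfl⟩
  obtain ⟨t, ht, rfl⟩ := (mem_parallelepiped_iff _ _).1 hx
  have h₀ : 0 ≤ t 0 := ht.1 0
  have h₁ : 0 ≤ t 1 := ht.1 1
  have h₀' : t 0 ≤ 1 := ht.2 0
  have h₁' : t 1 ≤ 1 := ht.2 1
  convert add_smul_sub_add_smul_sub_mem_convexHull (p := p) (q := q) (r := r)
    (s := 2⁻¹ * t 0) (t := 2⁻¹ * t 1) (by positivity) (by positivity) (by linarith) using 1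
  simp [Fin.sum_univ_two, smul_add, smul_smul, vadd_eq_add]

variable [NormedAddCommGroup E] [InnerProductSpace ℝ E] [FiniteDimensional ℝ E]
  [Fact (Module.finrank ℝ E = 2)] [MeasurableSpace E] [BorelSpace E]

open InnerProductGeometry in
theorem volume_parallelepiped_pair (u v : E) :
    volume (parallelepiped ![u, v]) = ENNReal.ofReal (Real.sin (angle u v) * (‖u‖ * ‖v‖)) := by
  let o : Orientation ℝ E (Fin 2) := (Module.finBasisOfFinrankEq ℝ E Fact.out).orientation
  have hω := o.inner_sq_add_areaForm_sq u v
  rw [← o.measure_eq_volume, o.volumeForm.measure_parallelepiped, ← o.areaForm_to_volumeForm,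
    sin_angle_mul_norm_mul_norm, real_inner_self_eq_norm_sq, real_inner_self_eq_norm_sq,
    ← Real.sqrt_sq_eq_abs]
  congr 2
  linear_combination hω

open EuclideanGeometry Pointwise in
theorem EuclideanGeometry.sin_angle_mul_dist_mul_dist_div_four_le_volume_convexHull
    (p q r : E) :
    ENNReal.ofReal (Real.sin (∠ q p r) * (dist p q * dist p r) / 4) ≤
      volume (convexHull ℝ {p, q, r}) :=
  calc ENNReal.ofReal (Real.sin (∠ q p r) * (dist p q * dist p r) / 4)
      = volume (p +ᵥ (2⁻¹ : ℝ) • parallelepiped ![q - p, r - p]) := by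
        rw [measure_vadd, Measure.addHaar_smul, volume_parallelepiped_pair,
          ← ENNReal.ofReal_mul (by positivity), EuclideanGeometry.angle, dist_eq_norm' p q,
          dist_eq_norm' p r, vsub_eq_sub, vsub_eq_sub, (Fact.out : Module.finrank ℝ E = 2)]
        congr 1
        norm_num
        ring
    _ ≤ volume (convexHull ℝ {p, q, r}) :=
        measure_mono (vadd_half_smul_parallelepiped_subset_convexHull p q r)

end Triangle

namespace Quad

open EuclideanGeometry

theorem diam_le_of_dist_le (q : Quad) {D : ℝ} (hD : 0 ≤ D) (h₁₂ : dist q.z1 q.z2 ≤ D)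
    (h₁₃ : dist q.z1 q.z3 ≤ D) (h₁₄ : dist q.z1 q.z4 ≤ D) (h₂₃ : dist q.z2 q.z3 ≤ D)
    (h₂₄ : dist q.z2 q.z4 ≤ D) (h₃₄ : dist q.z3 q.z4 ≤ D) : q.diam ≤ D := by
  refine Metric.diam_le_of_forall_dist_le hD ?_
  simp only [vertexSet, Set.mem_insert_iff, Set.mem_singleton_iff]
  rintro x (rfl | rfl | rfl | rfl) y (rfl | rfl | rfl | rfl) <;>
    first | (rw [dist_self]; exact hD) | assumption | (rw [dist_comm]; assumption)

theorem diam_le_two_mul_edgeLen (q : Quad) {K : ℝ}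
    (h : ∀ i j, q.edgeLen i ≤ K * q.edgeLen j) (j : Fin 4) :
    q.diam ≤ 2 * K * q.edgeLen j := by
  have e₁₂ : dist q.z1 q.z2 ≤ K * q.edgeLen j := h 0 j
  have e₂₃ : dist q.z2 q.z3 ≤ K * q.edgeLen j := h 1 j
  have e₃₄ : dist q.z3 q.z4 ≤ K * q.edgeLen j := h 2 j
  have e₄₁ : dist q.z4 q.z1 ≤ K * q.edgeLen j := h 3 j
  have hD : 0 ≤ K * q.edgeLen j := dist_nonneg.trans e₁₂
  exact q.diam_le_of_dist_le (by linarith) (by linarith)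
    (by linarith [dist_triangle q.z1 q.z2 q.z3]) (by rw [dist_comm]; linarith) (by linarith)
    (by linarith [dist_triangle q.z2 q.z3 q.z4]) (by linarith)

theorem isCompact_region (q : Quad) : IsCompact q.region := by
  unfold region
  split_ifs <;>
    exact ((Set.toFinite _).isCompact_convexHull ℝ).union ((Set.toFinite _).isCompact_convexHull ℝ)

theorem sin_angle_mul_dist_mul_dist_div_four_le_area (q : Quad) {p a r : ℂ}
    (h : convexHull ℝ {p, a, r} ⊆ q.region) :
    Real.sin (∠ a p r) * (dist p a * dist p r) / 4 ≤ q.area :=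
  have := Complex.finrank_real_complex_fact
  (ENNReal.ofReal_le_iff_le_toReal q.isCompact_region.measure_lt_top.ne).1 <|
    (sin_angle_mul_dist_mul_dist_div_four_le_volume_convexHull p a r).trans (measure_mono h)

theorem mul_diam_sq_le_area_of_triangle (q : Quad) {K θ : ℝ} {p a r : ℂ} (hK : K ≠ 0)
    (hθ : 0 ≤ θ) (hsub : convexHull ℝ {p, a, r} ⊆ q.region) (h₁ : θ ≤ ∠ a p r)
    (h₂ : ∠ a p r ≤ Real.pi - θ) (ha : q.diam ≤ 2 * K * dist p a)
    (hr : q.diam ≤ 2 * K * dist p r) :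
    Real.sin θ / (16 * K ^ 2) * q.diam ^ 2 ≤ q.area := by
  have hsin := Real.sin_le_sin_of_le_of_le_pi_sub hθ h₁ h₂
  have hsin₀ : 0 ≤ Real.sin θ :=
    Real.sin_nonneg_of_nonneg_of_le_pi hθ (by linarith [Real.pi_pos])
  have hdiam : 0 ≤ q.diam := Metric.diam_nonneg
  have hsq : q.diam ^ 2 ≤ (2 * K * dist p a) * (2 * K * dist p r) := by
    rw [pow_two]
    exact mul_le_mul ha hr hdiam (hdiam.trans ha)
  calc Real.sin θ / (16 * K ^ 2) * q.diam ^ 2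
      ≤ Real.sin θ / (16 * K ^ 2) * ((2 * K * dist p a) * (2 * K * dist p r)) :=
        mul_le_mul_of_nonneg_left hsq (div_nonneg hsin₀ (by positivity))
    _ = Real.sin θ * (dist p a * dist p r) / 4 := by field_simp; ring
    _ ≤ Real.sin (∠ a p r) * (dist p a * dist p r) / 4 := by gcongr
    _ ≤ q.area := q.sin_angle_mul_dist_mul_dist_div_four_le_area hsub

end Quad

/-- For every `K ≥ 4` there is `C_K > 0` such that every simple `K`-round
quadrilateral with interior diagonal `[z1,z3]` satisfies `area(f) ≥ C_K · diam(f)²`. -/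
theorem area_lower_bound (K : ℝ) (hK : 4 ≤ K) :
    ∃ C : ℝ, 0 < C ∧ ∀ q : Quad, q.Simple → q.KRound K → q.DiagInterior13 →
      C * q.diam ^ 2 ≤ q.area := by
  have hK₀ : 0 < K := by linarith
  set θ := Real.pi / K
  have hθ : 0 < θ := by positivity
  have h2θ : 2 * Real.pi / K = 2 * θ := by ring
  refine ⟨Real.sin θ / (16 * K ^ 2), ?_, ?_⟩
  · have := Real.sin_pos_of_pos_of_lt_pi hθ (div_lt_self Real.pi_pos (by linarith))
    positivity
  rintro q ⟨⟨h12, -, -, -, -, h34⟩, -⟩ ⟨hA1, hA2, -, hA4, hedge⟩ hdiag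
  have hdiam := q.diam_le_two_mul_edgeLen hedge
  have hregion : q.region =
      convexHull ℝ {q.z1, q.z2, q.z3} ∪ convexHull ℝ {q.z1, q.z3, q.z4} := if_pos hdiag
  have hsplit := EuclideanGeometry.angle_le_angle_add_angle q.z1 q.z4 q.z3 q.z2
  rcases le_or_gt θ (EuclideanGeometry.angle q.z3 q.z1 q.z2) with h | h
  · have hsum := EuclideanGeometry.angle_add_angle_add_angle_eq_pi q.z3 h12.symm
    refine q.mul_diam_sq_le_area_of_triangle (p := q.z2) (a := q.z1) (r := q.z3) hK₀.ne'
      hθ.le ?_ (by linarith) (by linarith [EuclideanGeometry.angle_nonneg q.z2 q.z3 q.z1])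
      (by rw [dist_comm]; exact hdiam 0) (hdiam 1)
    rw [hregion, Set.insert_comm]
    exact Set.subset_union_left
  · have hsum := EuclideanGeometry.angle_add_angle_add_angle_eq_pi q.z1 h34.symm
    refine q.mul_diam_sq_le_area_of_triangle (p := q.z4) (a := q.z3) (r := q.z1) hK₀.ne'
      hθ.le ?_ (by linarith) (by linarith [EuclideanGeometry.angle_nonneg q.z1 q.z3 q.z4])
      (by rw [dist_comm]; exact hdiam 2) (hdiam 3)
    rw [hregion]
    exact (convexHull_mono (by simp [Set.insert_subset_iff])).trans Set.subset_union_right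
end

section
/- Let z1,z2,z3,z4 ∈ ℂ with z1 ≠ z3, z2 ≠ z4 and orthogonal diagonals, i.e. Re[conj(z3−z1)·(z4−z2)] = 0. Suppose p ∈ ℂ satisfies either the pair of equations Re[conj(z1−z3)·(p−(z1+z3)/2)] = 0 and Re[conj(z2−z4)·(p−(z2+z4)/2)] = 0, or the pair of equations Re[(z1−z3)·(p−(z1+z3)/2)] = 0 and Re[(z2−z4)·(p−(z2+z4)/2)] = 0. Then |p − (z1+z2+z3+z4)/4| = |z2+z4−z1−z3|/4; that is, p lies on the circle whose diameter has endpoints (z1+z3)/2 and (z2+z4)/2. -/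
open Complex Set MeasureTheory Filter
open scoped Classical ENNReal

/-!
In the real plane, a vector orthogonal to `z1 - z3` is parallel to `z2 - z4`, because the two
diagonals are orthogonal. The two lines through `p` are orthogonal to the diagonals, so
`p - (z1 + z3) / 2` is parallel to `z2 - z4` and hence orthogonal to `p - (z2 + z4) / 2`. By
Thales' theorem `p` lies on the circle with diameter `[(z1 + z3) / 2, (z2 + z4) / 2]`. The second
pair of lines is the image of the first under complex conjugation, which preserves the real inner
product.
-/

open ComplexConjugate
open scoped InnerProductSpace

theorem inner_eq_zero_of_inner_eq_zero_of_finrank_eq_two {𝕜 E : Type*} [RCLike 𝕜]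
    [NormedAddCommGroup E] [InnerProductSpace 𝕜 E] [Fact (Module.finrank 𝕜 E = 2)]
    {u v x y : E} (hu : u ≠ 0) (hv : v ≠ 0) (huv : ⟪u, v⟫_𝕜 = 0) (hx : ⟪u, x⟫_𝕜 = 0)
    (hy : ⟪v, y⟫_𝕜 = 0) : ⟪x, y⟫_𝕜 = 0 := by
  obtain ⟨c, rfl⟩ := Submodule.mem_span_singleton.1
    (Submodule.mem_span_singleton_of_inner_eq_zero_of_inner_eq_zero hu hv hx huv)
  rw [inner_smul_left, hy, mul_zero]

theorem EuclideanGeometry.dist_midpoint_eq_half_dist_of_inner_eq_zero {V P : Type*}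
    [NormedAddCommGroup V] [InnerProductSpace ℝ V] [MetricSpace P] [NormedAddTorsor V P]
    {a b p : P} (h : ⟪a -ᵥ p, b -ᵥ p⟫_ℝ = 0) : dist p (midpoint ℝ a b) = dist a b / 2 :=
  Sphere.angle_eq_pi_div_two_iff_mem_sphere_ofDiameter.1
    ((InnerProductGeometry.inner_eq_zero_iff_angle_eq_pi_div_two (a -ᵥ p) (b -ᵥ p)).1 h)

theorem Complex.inner_conj_conj (w z : ℂ) : ⟪conj w, conj z⟫_ℝ = ⟪w, z⟫_ℝ := by
  rw [← conjLIE_apply, ← conjLIE_apply, LinearIsometryEquiv.inner_map_map]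

attribute [local instance] Complex.finrank_real_complex_fact

/-- For a quadrilateral with orthogonal diagonals, the intersection point of
the two perpendicular bisectors of the diagonals (or of the two "conjugate" lines) lies on the
circle whose diameter has endpoints `(z1+z3)/2` and `(z2+z4)/2`. -/
theorem bisector_intersection_on_circle (z1 z2 z3 z4 p : ℂ)
    (h13 : z1 ≠ z3) (h24 : z2 ≠ z4)
    (horth : ((starRingEnd ℂ) (z3 - z1) * (z4 - z2)).re = 0)
    (hp : (((starRingEnd ℂ) (z1 - z3) * (p - (z1 + z3) / 2)).re = 0 ∧
           ((starRingEnd ℂ) (z2 - z4) * (p - (z2 + z4) / 2)).re = 0) ∨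
          (((z1 - z3) * (p - (z1 + z3) / 2)).re = 0 ∧
           ((z2 - z4) * (p - (z2 + z4) / 2)).re = 0)) :
    ‖p - (z1 + z2 + z3 + z4) / 4‖ = ‖z2 + z4 - z1 - z3‖ / 4 := by
  have hdiag : ⟪z1 - z3, z2 - z4⟫_ℝ = 0 := by
    rwa [Complex.inner, mul_comm, ← neg_sub z3, ← neg_sub z4, map_neg, neg_mul_neg]
  have hperp : ⟪p - (z1 + z3) / 2, p - (z2 + z4) / 2⟫_ℝ = 0 := by
    rcases hp with ⟨h1, h2⟩ | ⟨h1, h2⟩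
    · refine inner_eq_zero_of_inner_eq_zero_of_finrank_eq_two (sub_ne_zero.2 h13)
        (sub_ne_zero.2 h24) hdiag ?_ ?_ <;> rwa [Complex.inner, mul_comm]
    · refine inner_eq_zero_of_inner_eq_zero_of_finrank_eq_two
        ((map_ne_zero conj).2 (sub_ne_zero.2 h13)) ((map_ne_zero conj).2 (sub_ne_zero.2 h24))
        ((Complex.inner_conj_conj _ _).trans hdiag) ?_ ?_ <;>
        rwa [Complex.inner, conj_conj, mul_comm]
  have hthales := EuclideanGeometry.dist_midpoint_eq_half_dist_of_inner_eq_zero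
    (a := (z1 + z3) / 2) (b := (z2 + z4) / 2) (p := p)
    (by rwa [vsub_eq_sub, vsub_eq_sub, ← neg_sub p, ← neg_sub p, inner_neg_neg])
  have hcenter : midpoint ℝ ((z1 + z3) / 2) ((z2 + z4) / 2) = (z1 + z2 + z3 + z4) / 4 := by
    rw [midpoint_eq_smul_add, invOf_eq_inv, Complex.real_smul]
    push_cast
    ring
  rw [hcenter, dist_eq_norm, dist_comm, dist_eq_norm,
    show (z2 + z4) / 2 - (z1 + z3) / 2 = (z2 + z4 - z1 - z3) / 2 by ring, norm_div] at hthales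
  rw [hthales]
  norm_num
  ring
end

section
/- For every K ≥ 4 there exists a constant C_K > 0, depending only on K, such that the following holds. Let f = [z1,z2,z3,z4] be a simple K-round quadrilateral in ℂ with orthogonal diagonals (Re[conj(z3−z1)·(z4−z2)] = 0) whose diagonal [z1,z3] is interior, and let p ∈ ℂ satisfy Re[(z1−z3)·(p−(z1+z3)/2)] = 0 and Re[(z2−z4)·(p−(z2+z4)/2)] = 0. Then |Im[(2p−z2−z4)·(z4−z2)]| ≤ C_K · area(f). -/
open Complex Set MeasureTheory Filter
open scoped Classical ENNReal

/-! Because `p` lies on the perpendicular bisector of `[z1,z3]` and the diagonals are orthogonal,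
`p - (z1 + z3)/2` is parallel to `z4 - z2`; hence the quantity to bound is
`2 Im[(m₁₃ - m₂₄)(z4 - z2)]`, where `m₁₃, m₂₄` are the midpoints of the diagonals, and it is at
most `(|z1 - z2| + |z3 - z4|)·|z4 - z2| ≤ (K + 1)·|z1 - z2|·|z4 - z2|`. The angle at `z2` is at
least `2π/K ≤ π/2`, so the law of cosines gives `√(1 - cos(2π/K))·|z1 - z2| ≤ |z3 - z1|`. Finally,
cutting along the interior diagonal, the shoelace areas of the two triangles add up to
`Im[conj(z3 - z1)(z4 - z2)]`, which by orthogonality is `±|z3 - z1|·|z4 - z2|`. -/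

open ComplexConjugate
open scoped Pointwise Real

namespace Complex

theorem ofReal_quarter_le_volume_convexHull_zero_one_I :
    ENNReal.ofReal (1 / 4) ≤ volume (convexHull ℝ ({0, 1, I} : Set ℂ)) := by
  let square : Set ℂ := measurableEquivRealProd ⁻¹' (Icc (0 : ℝ) 2⁻¹ ×ˢ Icc (0 : ℝ) 2⁻¹)
  have square_subset : square ⊆ convexHull ℝ {0, 1, I} := by
    intro z hz
    obtain ⟨⟨hre₀, hre₁⟩, him₀, him₁⟩ : z.re ∈ Icc (0 : ℝ) 2⁻¹ ∧ z.im ∈ Icc (0 : ℝ) 2⁻¹ := hz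
    have weights_sum : ∑ i, ![1 - z.re - z.im, z.re, z.im] i = 1 := by
      simp only [Fin.sum_univ_three, Matrix.cons_val]; ring
    have := (Finset.univ : Finset (Fin 3)).centerMass_mem_convexHull
      (w := ![1 - z.re - z.im, z.re, z.im]) (z := ![0, 1, I]) (s := ({0, 1, I} : Set ℂ))
      (by intro i _; fin_cases i <;> simp <;> linarith) (by rw [weights_sum]; norm_num)
      (by intro i _; fin_cases i <;> simp)
    rw [Finset.centerMass_eq_of_sum_1 _ _ weights_sum, Fin.sum_univ_three] at this
    simpa [real_smul, re_add_im] using this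
  calc ENNReal.ofReal (1 / 4) = volume square := by
        rw [volume_preserving_equiv_real_prod.measure_preimage
          (measurableSet_Icc.prod measurableSet_Icc).nullMeasurableSet,
          Measure.volume_eq_prod, Measure.prod_prod, Real.volume_Icc,
          ← ENNReal.ofReal_mul (by norm_num)]
        norm_num
    _ ≤ _ := measure_mono square_subset

/-- The triangle `abc` is the image of `{0, 1, I}` under `z ↦ a + z.re • (b - a) + z.im • (c - a)`,
a map of determinant the signed doubled area `Im (conj (b - a) * (c - a))`. -/
theorem ofReal_abs_im_div_four_le_volume_convexHull (a b c : ℂ) :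
    ENNReal.ofReal (|(conj (b - a) * (c - a)).im| / 4)
      ≤ volume (convexHull ℝ ({a, b, c} : Set ℂ)) := by
  let L : ℂ →ₗ[ℝ] ℂ := (LinearMap.toSpanSingleton ℝ ℂ (b - a)).comp reLm
      + (LinearMap.toSpanSingleton ℝ ℂ (c - a)).comp imLm
  have abs_det : |L.det| = |(conj (b - a) * (c - a)).im| := by
    rw [← LinearMap.det_toMatrix basisOneI, Matrix.det_fin_two]
    simp [L, LinearMap.toMatrix_apply, LinearMap.toSpanSingleton, mul_im]
    ring_nf
  have image_eq : a +ᵥ L '' convexHull ℝ {0, 1, I} = convexHull ℝ {a, b, c} := by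
    rw [L.image_convexHull, ← convexHull_vadd]
    congr 1
    simp [image_insert_eq, L, LinearMap.toSpanSingleton, vadd_set_insert]
  rw [← image_eq, measure_vadd, Measure.addHaar_image_linearMap, abs_det,
    div_eq_mul_inv, ENNReal.ofReal_mul (abs_nonneg _)]
  exact mul_le_mul_right (by simpa using ofReal_quarter_le_volume_convexHull_zero_one_I) _

theorem im_mul_eq_zero_of_re_mul_eq_zero {d w z : ℂ} (hd : d ≠ 0) (hdz : (d * z).re = 0)
    (hdw : (conj d * w).re = 0) : (w * z).im = 0 := by
  -- both factors on the left are purely imaginary, so their product is real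
  have key : (d * z) * (conj d * w) = (normSq d : ℂ) * (w * z) := by
    rw [normSq_eq_conj_mul_self]; ring
  have := congrArg im key
  rw [mul_im, hdz, hdw, im_ofReal_mul] at this
  simpa [normSq_eq_zero, hd] using this

end Complex

theorem two_pi_div_le_pi_div_two {K : ℝ} (hK : 4 ≤ K) : 2 * π / K ≤ π / 2 := by
  rw [div_le_div_iff₀ (by linarith) two_pos]
  nlinarith [Real.pi_pos]

theorem InnerProductGeometry.one_sub_cos_mul_sq_norm_le_norm_sub_sq {V : Type*}
    [NormedAddCommGroup V] [InnerProductSpace ℝ V] {x y : V} {θ : ℝ} (hθ₀ : 0 ≤ θ)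
    (hθ : θ ≤ π / 2) (hθxy : θ ≤ angle x y) :
    (1 - Real.cos θ) * ‖x‖ ^ 2 ≤ ‖x - y‖ ^ 2 := by
  have cos_nonneg : 0 ≤ Real.cos θ := Real.cos_nonneg_of_mem_Icc ⟨by linarith, hθ⟩
  have inner_le : inner ℝ x y ≤ Real.cos θ * (‖x‖ * ‖y‖) := by
    rw [← cos_angle_mul_norm_mul_norm]
    exact mul_le_mul_of_nonneg_right
      (Real.cos_le_cos_of_nonneg_of_le_pi hθ₀ (angle_le_pi x y) hθxy) (by positivity)
  rw [norm_sub_sq_real]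
  nlinarith [sq_nonneg (‖x‖ - ‖y‖), Real.cos_le_one θ, sq_nonneg ‖y‖]

namespace Quad

theorem volume_region_lt_top (q : Quad) : volume q.region < ⊤ := by
  unfold region
  split_ifs <;>
  exact measure_union_lt_top ((toFinite _).isCompact_convexHull (𝕜 := ℝ) |>.measure_lt_top)
    ((toFinite _).isCompact_convexHull (𝕜 := ℝ) |>.measure_lt_top)

theorem abs_im_conj_diag_mul_diag_le_area {q : Quad} (hdi : q.DiagInterior13) :
    |(conj (q.z3 - q.z1) * (q.z4 - q.z2)).im| ≤ 8 * q.area := by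
  have le_area {S : Set ℂ} {r : ℝ} (hr : 0 ≤ r) (hS : S ⊆ q.region)
      (hrS : ENNReal.ofReal r ≤ volume S) : r ≤ q.area := by
    rw [← ENNReal.toReal_ofReal hr]
    exact ENNReal.toReal_mono q.volume_region_lt_top.ne (hrS.trans (measure_mono hS))
  rw [region, if_pos hdi] at le_area
  have triangle₁ := le_area (by positivity) subset_union_left
    (ofReal_abs_im_div_four_le_volume_convexHull q.z1 q.z2 q.z3)
  have triangle₂ := le_area (by positivity) subset_union_right
    (ofReal_abs_im_div_four_le_volume_convexHull q.z1 q.z3 q.z4)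
  have shoelace : (conj (q.z3 - q.z1) * (q.z4 - q.z2)).im =
      (conj (q.z2 - q.z1) * (q.z3 - q.z1)).im + (conj (q.z3 - q.z1) * (q.z4 - q.z1)).im := by
    simp only [mul_im, sub_re, sub_im, conj_re, conj_im]
    ring
  rw [shoelace]
  linarith [abs_add_le (conj (q.z2 - q.z1) * (q.z3 - q.z1)).im
    (conj (q.z3 - q.z1) * (q.z4 - q.z1)).im]

theorem norm_diag_mul_norm_diag_le_area {q : Quad} (ho : q.Orthogonal)
    (hdi : q.DiagInterior13) : ‖q.z3 - q.z1‖ * ‖q.z4 - q.z2‖ ≤ 8 * q.area := by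
  rw [← norm_conj, ← norm_mul, ← abs_im_eq_norm.mpr ho]
  exact abs_im_conj_diag_mul_diag_le_area hdi

theorem KRound.sqrt_one_sub_cos_mul_dist_le {q : Quad} {K : ℝ} (hq : q.KRound K) (hK : 4 ≤ K) :
    √(1 - Real.cos (2 * π / K)) * dist q.z1 q.z2 ≤ ‖q.z3 - q.z1‖ := by
  have hθ₀ : 0 ≤ 2 * π / K := by have := Real.pi_pos; positivity
  refine le_of_pow_le_pow_left₀ two_ne_zero (norm_nonneg _) ?_
  rw [mul_pow, Real.sq_sqrt (by linarith [Real.cos_le_one (2 * π / K)]),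
    dist_eq_norm, norm_sub_rev q.z3, ← sub_sub_sub_cancel_right q.z1 q.z3 q.z2]
  exact InnerProductGeometry.one_sub_cos_mul_sq_norm_le_norm_sub_sq hθ₀
    (two_pi_div_le_pi_div_two hK) hq.2.1

theorem abs_im_bisector_le {q : Quad} {p : ℂ} (hd : q.z1 ≠ q.z3) (ho : q.Orthogonal)
    (hp : ((q.z1 - q.z3) * (p - (q.z1 + q.z3) / 2)).re = 0) :
    |((2 * p - q.z2 - q.z4) * (q.z4 - q.z2)).im|
      ≤ (dist q.z1 q.z2 + dist q.z3 q.z4) * ‖q.z4 - q.z2‖ := by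
  set m := (q.z1 + q.z3) / 2 - (q.z2 + q.z4) / 2
  have parallel : ((q.z4 - q.z2) * (p - (q.z1 + q.z3) / 2)).im = 0 := by
    refine im_mul_eq_zero_of_re_mul_eq_zero (sub_ne_zero.2 hd) hp ?_
    rw [← neg_sub q.z3, map_neg, neg_mul, neg_re, ho, neg_zero]
  have split : (2 * p - q.z2 - q.z4) * (q.z4 - q.z2)
      = 2 * ((q.z4 - q.z2) * (p - (q.z1 + q.z3) / 2)) + 2 * (m * (q.z4 - q.z2)) := by
    ring
  have norm_m : ‖m‖ ≤ (dist q.z1 q.z2 + dist q.z3 q.z4) / 2 := by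
    rw [show m = ((q.z1 - q.z2) + (q.z3 - q.z4)) / 2 by ring, norm_div, dist_eq_norm,
      dist_eq_norm, RCLike.norm_ofNat]
    gcongr
    exact norm_add_le _ _
  calc |((2 * p - q.z2 - q.z4) * (q.z4 - q.z2)).im|
      = 2 * |(m * (q.z4 - q.z2)).im| := by simp [split, parallel, abs_mul]
    _ ≤ 2 * (‖m‖ * ‖q.z4 - q.z2‖) := by grw [abs_im_le_norm, norm_mul]
    _ ≤ (dist q.z1 q.z2 + dist q.z3 q.z4) * ‖q.z4 - q.z2‖ := by
      nlinarith [norm_nonneg (q.z4 - q.z2)]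

end Quad

/-- For every `K ≥ 4` there is `C_K > 0` such that for any simple `K`-round
orthogonal quadrilateral with interior diagonal `[z1,z3]`, and `z''` the intersection of the
two conjugate bisector lines, `|Im[(2z''−z2−z4)(z4−z2)]| ≤ C_K · area(f)`. -/
theorem im_bisector_bound (K : ℝ) (hK : 4 ≤ K) :
    ∃ C : ℝ, 0 < C ∧ ∀ (q : Quad) (p : ℂ), q.Simple → q.KRound K → q.Orthogonal →
      q.DiagInterior13 →
      ((q.z1 - q.z3) * (p - (q.z1 + q.z3) / 2)).re = 0 →
      ((q.z2 - q.z4) * (p - (q.z2 + q.z4) / 2)).re = 0 →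
      |((2 * p - q.z2 - q.z4) * (q.z4 - q.z2)).im| ≤ C * q.area := by
  set s := √(1 - Real.cos (2 * π / K))
  have hs : 0 < s := by
    refine Real.sqrt_pos.2 (sub_pos.2 ?_)
    rw [← Real.cos_zero]
    exact Real.cos_lt_cos_of_nonneg_of_le_pi_div_two le_rfl (two_pi_div_le_pi_div_two hK)
      (by positivity)
  refine ⟨8 * (K + 1) / s, by positivity, fun q p hq hround ho hdi hp _ => ?_⟩
  have edge_le_diag := hround.sqrt_one_sub_cos_mul_dist_le hK
  calc |((2 * p - q.z2 - q.z4) * (q.z4 - q.z2)).im|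
      ≤ (dist q.z1 q.z2 + dist q.z3 q.z4) * ‖q.z4 - q.z2‖ := Quad.abs_im_bisector_le hq.1.2.1 ho hp
    _ ≤ (K + 1) * dist q.z1 q.z2 * ‖q.z4 - q.z2‖ := by
      have edge_ratio : dist q.z3 q.z4 ≤ K * dist q.z1 q.z2 := hround.2.2.2.2 2 0
      gcongr; linarith
    _ = (K + 1) / s * (s * dist q.z1 q.z2 * ‖q.z4 - q.z2‖) := by field_simp
    _ ≤ (K + 1) / s * (‖q.z3 - q.z1‖ * ‖q.z4 - q.z2‖) := by gcongr
    _ ≤ (K + 1) / s * (8 * q.area) :=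
      mul_le_mul_of_nonneg_left (Quad.norm_diag_mul_norm_diag_le_area ho hdi) (by positivity)
    _ = 8 * (K + 1) / s * q.area := by ring
end

section
/- Let m ≥ 1, let w : {0,1,…,m} → ℂ satisfy w(i) ≠ w(i−1) for all 1 ≤ i ≤ m, let u : {0,1,…,m} → ℝ, and for each 1 ≤ i ≤ m let v_i ∈ ℂ satisfy Re[conj(v_i)·(w(i)−w(i−1))] = u(i) − u(i−1). Then Σ_{i=1}^{m} |v_i|²·|w(i)−w(i−1)| ≥ (u(m)−u(0))² / ℓ, where ℓ = Σ_{i=1}^{m} |w(i)−w(i−1)| is the Euclidean length of the path. -/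
open Complex Set MeasureTheory Filter
open scoped Classical ENNReal

theorem dist_le_sum_Icc_dist {α : Type*} [PseudoMetricSpace α] (f : ℕ → α) (m : ℕ) :
    dist (f m) (f 0) ≤ ∑ i ∈ Finset.Icc 1 m, dist (f i) (f (i - 1)) := by
  rw [dist_comm, ← Finset.Ico_add_one_right_eq_Icc, Finset.sum_Ico_eq_sum_range]
  simpa [dist_comm, add_comm] using dist_le_range_sum_dist f m

theorem Complex.abs_re_conj_mul_le_norm_mul_norm (v z : ℂ) :
    |((starRingEnd ℂ) v * z).re| ≤ ‖v‖ * ‖z‖ := by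
  simpa [Complex.inner, mul_comm] using abs_real_inner_le_norm v z

theorem Finset.sq_div_sum_le_sum_sq_mul_of_abs_le {ι : Type*} (s : Finset ι) {a d : ι → ℝ}
    {x : ℝ} (hd : ∀ i ∈ s, 0 ≤ d i) (hx : |x| ≤ ∑ i ∈ s, a i * d i) :
    x ^ 2 / ∑ i ∈ s, d i ≤ ∑ i ∈ s, a i ^ 2 * d i := by
  have had : ∀ i ∈ s, 0 ≤ a i ^ 2 * d i := fun i hi => mul_nonneg (sq_nonneg _) (hd i hi)
  have hcs : (∑ i ∈ s, a i * d i) ^ 2 ≤ (∑ i ∈ s, a i ^ 2 * d i) * ∑ i ∈ s, d i :=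
    Finset.sum_sq_le_sum_mul_sum_of_sq_le_mul s had hd fun i _ => le_of_eq (by ring)
  refine div_le_of_le_mul₀ (Finset.sum_nonneg hd) (Finset.sum_nonneg had) ?_
  exact (sq_le_sq' (neg_le_of_abs_le hx) (le_of_abs_le hx)).trans hcs

theorem semiEnergy_path_lower_bound_general (m : ℕ)
    (w : ℕ → ℂ) (u : ℕ → ℝ) (v : ℕ → ℂ)
    (hv : ∀ i, 1 ≤ i → i ≤ m →
      ((starRingEnd ℂ) (v i) * (w i - w (i - 1))).re = u i - u (i - 1)) :
    (u m - u 0) ^ 2 / (∑ i ∈ Finset.Icc 1 m, dist (w i) (w (i - 1))) ≤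
      ∑ i ∈ Finset.Icc 1 m, ‖v i‖ ^ 2 * dist (w i) (w (i - 1)) := by
  have hstep : ∀ i ∈ Finset.Icc 1 m,
      dist (u i) (u (i - 1)) ≤ ‖v i‖ * dist (w i) (w (i - 1)) := by
    intro i hi
    obtain ⟨hi1, him⟩ := Finset.mem_Icc.1 hi
    rw [Real.dist_eq, ← hv i hi1 him, dist_eq_norm]
    exact Complex.abs_re_conj_mul_le_norm_mul_norm _ _
  refine Finset.sq_div_sum_le_sum_sq_mul_of_abs_le _ (fun _ _ => dist_nonneg) ?_
  rw [← Real.dist_eq]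
  exact (dist_le_sum_Icc_dist u m).trans (Finset.sum_le_sum hstep)

/-- Semi-energy lower bound along a path: if each `vᵢ` satisfies
`Re[conj(vᵢ)·(w i − w (i−1))] = u i − u (i−1)`, then
`Σ |vᵢ|²·|w i − w (i−1)| ≥ (u m − u 0)² / Σ |w i − w (i−1)|`. -/
theorem semiEnergy_path_lower_bound (m : ℕ) (hm : 1 ≤ m)
    (w : ℕ → ℂ) (u : ℕ → ℝ) (v : ℕ → ℂ)
    (hw : ∀ i, 1 ≤ i → i ≤ m → w i ≠ w (i - 1))
    (hv : ∀ i, 1 ≤ i → i ≤ m →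
      ((starRingEnd ℂ) (v i) * (w i - w (i - 1))).re = u i - u (i - 1)) :
    (u m - u 0) ^ 2 / (∑ i ∈ Finset.Icc 1 m, dist (w i) (w (i - 1))) ≤
      ∑ i ∈ Finset.Icc 1 m, ‖v i‖ ^ 2 * dist (w i) (w (i - 1)) :=
  semiEnergy_path_lower_bound_general m w u v hv
end

section
/- There exists an absolute constant C > 0 such that the following holds. Let f = [z1,z2,z3,z4] be a quadrilateral in ℂ (four pairwise distinct points) with orthogonal diagonals, i.e. Re[conj(z3−z1)·(z4−z2)] = 0 with z1 ≠ z3 and z2 ≠ z4. Let g : ℂ → ℝ be twice continuously differentiable on the convex hull of {z1,z2,z3,z4}, and let v ∈ ℂ be the discrete gradient of g on f, i.e. the unique v with Re[conj(v)·(z3−z1)] = g(z3)−g(z1) and Re[conj(v)·(z4−z2)] = g(z4)−g(z2). Then |∇g(z1) − v| ≤ C · diam(f) · max{‖D²g(ζ)‖ : ζ ∈ conv(z1,z2,z3,z4)}, where ∇g(z1) ∈ ℂ is the gradient of g at z1 (identifying ℂ with ℝ²), D²g is the second derivative of g, and diam(f) is the maximal distance between two of the four vertices. -/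
open Complex Set MeasureTheory Filter
open scoped Classical ENNReal

/-!
Taylor's theorem with the Hessian bound `M2` shows that `G ⊙ (b - a)` differs from
`g b - g a` by at most `M2 · diam(f) · |b - a|` for any two points of the hull. The discrete
gradient `v` reproduces `g b - g a` exactly along both diagonals, so `G - v` has components of
size at most `M2 · diam(f)` in the two orthogonal diagonal directions, and Pythagoras in
`ℂ ≅ ℝ²` gives `‖G - v‖ ≤ √2 · diam(f) · M2`.
-/

open scoped InnerProductSpace

section Calculus

variable {E F : Type*} [NormedAddCommGroup E] [NormedSpace ℝ E]
  [NormedAddCommGroup F] [NormedSpace ℝ F] {f : E → F} {s : Set E} {M : ℝ}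

theorem Convex.norm_fderivWithin_sub_le_of_norm_iteratedFDerivWithin_two_le (hs : Convex ℝ s)
    (hs' : UniqueDiffOn ℝ s) (hf : ContDiffOn ℝ 2 f s)
    (hM : ∀ x ∈ s, ‖iteratedFDerivWithin ℝ 2 f s x‖ ≤ M) {x y : E} (hx : x ∈ s) (hy : y ∈ s) :
    ‖fderivWithin ℝ f s y - fderivWithin ℝ f s x‖ ≤ M * ‖y - x‖ := by
  refine hs.norm_image_sub_le_of_norm_fderivWithin_le
    ((hf.fderivWithin hs' (by norm_num)).differentiableOn one_ne_zero) (fun z hz => ?_) hx hy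
  rw [← norm_iteratedFDerivWithin_one _ (hs' z hz), norm_iteratedFDerivWithin_fderivWithin hs' hz]
  exact hM z hz

theorem Convex.norm_image_sub_sub_le_of_norm_iteratedFDerivWithin_two_le (hs : Convex ℝ s)
    (hs' : UniqueDiffOn ℝ s) (hbdd : Bornology.IsBounded s) (hf : ContDiffOn ℝ 2 f s)
    (hM : ∀ x ∈ s, ‖iteratedFDerivWithin ℝ 2 f s x‖ ≤ M) {x₀ : E} {f' : E →L[ℝ] F}
    (hx₀ : x₀ ∈ s) (hf' : HasFDerivWithinAt f f' s x₀) {x y : E} (hx : x ∈ s) (hy : y ∈ s) :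
    ‖f y - f x - f' (y - x)‖ ≤ M * Metric.diam s * ‖y - x‖ := by
  have hM_nonneg : 0 ≤ M := (norm_nonneg _).trans (hM x₀ hx₀)
  refine hs.norm_image_sub_le_of_norm_fderivWithin_le' (hf.differentiableOn two_ne_zero)
    (fun z hz => ?_) hx hy
  rw [← hf'.fderivWithin (hs' x₀ hx₀)]
  calc ‖fderivWithin ℝ f s z - fderivWithin ℝ f s x₀‖
      ≤ M * ‖z - x₀‖ :=
        hs.norm_fderivWithin_sub_le_of_norm_iteratedFDerivWithin_two_le hs' hf hM hx₀ hz
    _ ≤ M * Metric.diam s := by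
        rw [← dist_eq_norm]
        exact mul_le_mul_of_nonneg_left (Metric.dist_le_diam_of_mem hbdd hz hx₀) hM_nonneg

end Calculus

section OrthogonalPair

variable {E : Type*} [NormedAddCommGroup E] [InnerProductSpace ℝ E] {e₁ e₂ : E}

theorem span_pair_eq_top_of_inner_eq_zero (hE : Module.finrank ℝ E = 2) (h₁ : e₁ ≠ 0)
    (h₂ : e₂ ≠ 0) (h : ⟪e₁, e₂⟫_ℝ = 0) : Submodule.span ℝ {e₁, e₂} = ⊤ := by
  have hind : LinearIndependent ℝ ![e₁, e₂] := by
    refine linearIndependent_of_ne_zero_of_inner_eq_zero (fun i => ?_) (fun i j hij => ?_)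
    · fin_cases i <;> assumption
    · fin_cases i <;> fin_cases j <;> simp_all [real_inner_comm]
  simpa [Matrix.range_cons, Set.range_unique, Set.singleton_union, Set.pair_comm, hE] using
    hind.span_eq_top_of_card_eq_finrank

theorem sq_norm_eq_of_span_pair_eq_top (hspan : Submodule.span ℝ {e₁, e₂} = ⊤)
    (h : ⟪e₁, e₂⟫_ℝ = 0) (w : E) :
    ‖w‖ ^ 2 = ⟪w, e₁⟫_ℝ ^ 2 / ‖e₁‖ ^ 2 + ⟪w, e₂⟫_ℝ ^ 2 / ‖e₂‖ ^ 2 := by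
  obtain ⟨a, b, rfl⟩ := Submodule.mem_span_pair.1 (hspan ▸ Submodule.mem_top : w ∈ _)
  have h' : ⟪e₂, e₁⟫_ℝ = 0 := by rwa [real_inner_comm]
  have hdiv : ∀ (c : ℝ) (e : E), (c * ‖e‖ ^ 2) ^ 2 / ‖e‖ ^ 2 = c ^ 2 * ‖e‖ ^ 2 := by
    intro c e
    rcases eq_or_ne ‖e‖ 0 with he | he
    · simp [he]
    · field_simp
  simp only [inner_add_left, inner_smul_left, real_inner_self_eq_norm_sq, h, h',
    RCLike.conj_to_real, mul_zero, add_zero, zero_add, hdiv]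
  rw [norm_add_sq_real, inner_smul_left, inner_smul_right, h, norm_smul, norm_smul,
    Real.norm_eq_abs, Real.norm_eq_abs, mul_pow, mul_pow, sq_abs, sq_abs]
  ring

theorem norm_le_sqrt_two_mul_of_abs_inner_le (hspan : Submodule.span ℝ {e₁, e₂} = ⊤)
    (h : ⟪e₁, e₂⟫_ℝ = 0) {w : E} {K : ℝ} (hK : 0 ≤ K) (h₁ : |⟪w, e₁⟫_ℝ| ≤ K * ‖e₁‖)
    (h₂ : |⟪w, e₂⟫_ℝ| ≤ K * ‖e₂‖) : ‖w‖ ≤ √2 * K := by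
  have hcomp : ∀ e : E, |⟪w, e⟫_ℝ| ≤ K * ‖e‖ → ⟪w, e⟫_ℝ ^ 2 / ‖e‖ ^ 2 ≤ K ^ 2 := by
    intro e he
    refine div_le_of_le_mul₀ (by positivity) (by positivity) ?_
    rw [← mul_pow, ← sq_abs]
    exact pow_le_pow_left₀ (abs_nonneg _) he 2
  have hsq : ‖w‖ ^ 2 ≤ (√2 * K) ^ 2 := by
    rw [sq_norm_eq_of_span_pair_eq_top hspan h, mul_pow, Real.sq_sqrt zero_le_two]
    linarith [hcomp e₁ h₁, hcomp e₂ h₂]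
  exact (pow_le_pow_iff_left₀ (norm_nonneg w) (by positivity) two_ne_zero).1 hsq

end OrthogonalPair

namespace Quad

theorem orthogonal_iff_inner_eq_zero (q : Quad) :
    q.Orthogonal ↔ ⟪q.z3 - q.z1, q.z4 - q.z2⟫_ℝ = 0 := by
  rw [Quad.Orthogonal, Complex.inner, mul_comm]

theorem isDiscreteGrad_iff_inner (q : Quad) (u : ℂ → ℝ) (v : ℂ) :
    q.IsDiscreteGrad u v ↔
      ⟪v, q.z3 - q.z1⟫_ℝ = u q.z3 - u q.z1 ∧ ⟪v, q.z4 - q.z2⟫_ℝ = u q.z4 - u q.z2 := by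
  simp only [Quad.IsDiscreteGrad, Complex.inner, mul_comm]

theorem uniqueDiffOn_convexHull_vertexSet (q : Quad) (h13 : q.z3 - q.z1 ≠ 0)
    (h24 : q.z4 - q.z2 ≠ 0) (horth : q.Orthogonal) :
    UniqueDiffOn ℝ (convexHull ℝ q.vertexSet) := by
  have hspan : Submodule.span ℝ {q.z3 - q.z1, q.z4 - q.z2} ≤ vectorSpan ℝ q.vertexSet :=
    Submodule.span_le.2 <| Set.insert_subset_iff.2
      ⟨vsub_mem_vectorSpan ℝ (by simp [vertexSet]) (by simp [vertexSet]),
        Set.singleton_subset_iff.2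
          (vsub_mem_vectorSpan ℝ (by simp [vertexSet]) (by simp [vertexSet]))⟩
  rw [span_pair_eq_top_of_inner_eq_zero Complex.finrank_real_complex h13 h24
    (q.orthogonal_iff_inner_eq_zero.1 horth), top_le_iff] at hspan
  refine uniqueDiffOn_convex (convex_convexHull ℝ _)
    (interior_convexHull_nonempty_iff_affineSpan_eq_top.2 ?_)
  rwa [AffineSubspace.affineSpan_eq_top_iff_vectorSpan_eq_top_of_nonempty ℝ ℂ ℂ
    ⟨q.z1, by simp [vertexSet]⟩]

end Quad

/-- There is an absolute constant `C > 0` such that for any quadrilateral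
with orthogonal nondegenerate diagonals and any `g` twice continuously differentiable on the
convex hull of the vertices, the gradient of `g` at `z1` (taken within the hull) and the
discrete gradient `v` of `g` on the face satisfy
`‖∇g(z1) − v‖ ≤ C · diam(f) · max ‖D²g‖`. -/
theorem discrete_gradient_approx :
    ∃ C : ℝ, 0 < C ∧
      ∀ (q : Quad) (g : ℂ → ℝ) (G v : ℂ),
        q.Distinct → q.Orthogonal →
        ContDiffOn ℝ 2 g (convexHull ℝ q.vertexSet) →
        HasGradientWithinAt g G (convexHull ℝ q.vertexSet) q.z1 →
        q.IsDiscreteGrad g v →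
        ∀ M2 : ℝ,
          (∀ ζ ∈ convexHull ℝ q.vertexSet,
            ‖iteratedFDerivWithin ℝ 2 g (convexHull ℝ q.vertexSet) ζ‖ ≤ M2) →
          ‖G - v‖ ≤ C * q.diam * M2 := by
  refine ⟨√2, by positivity, fun q g G v hq horth hg hG hv M2 hM2 => ?_⟩
  set s := convexHull ℝ q.vertexSet
  have h13 : q.z3 - q.z1 ≠ 0 := sub_ne_zero.2 hq.2.1.symm
  have h24 : q.z4 - q.z2 ≠ 0 := sub_ne_zero.2 hq.2.2.2.2.1.symm
  have hperp := q.orthogonal_iff_inner_eq_zero.1 horth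
  obtain ⟨h1, h2, h3, h4⟩ : q.z1 ∈ q.vertexSet ∧ q.z2 ∈ q.vertexSet ∧ q.z3 ∈ q.vertexSet ∧
      q.z4 ∈ q.vertexSet := by simp [Quad.vertexSet]
  have hvert : q.vertexSet ⊆ s := subset_convexHull ℝ _
  have hdiag : ∀ a ∈ q.vertexSet, ∀ b ∈ q.vertexSet, ⟪v, b - a⟫_ℝ = g b - g a →
      |⟪G - v, b - a⟫_ℝ| ≤ M2 * q.diam * ‖b - a‖ := by
    intro a ha b hb hab
    have htaylor :=
      (convex_convexHull ℝ _).norm_image_sub_sub_le_of_norm_iteratedFDerivWithin_two_le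
        (q.uniqueDiffOn_convexHull_vertexSet h13 h24 horth)
        (isBounded_convexHull.2 (Set.toFinite ({q.z1, q.z2, q.z3, q.z4} : Set ℂ)).isBounded)
        hg hM2 (hvert h1) hG.hasFDerivWithinAt (hvert ha) (hvert hb)
    rw [convexHull_diam, InnerProductSpace.toDual_apply_apply, Real.norm_eq_abs] at htaylor
    rwa [inner_sub_left, hab, abs_sub_comm]
  obtain ⟨hv13, hv24⟩ := (q.isDiscreteGrad_iff_inner g v).1 hv
  calc ‖G - v‖
      ≤ √2 * (M2 * q.diam) :=
        norm_le_sqrt_two_mul_of_abs_inner_le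
          (span_pair_eq_top_of_inner_eq_zero Complex.finrank_real_complex h13 h24 hperp) hperp
          (mul_nonneg ((norm_nonneg _).trans (hM2 _ (hvert h1))) Metric.diam_nonneg)
          (hdiag _ h1 _ h3 hv13) (hdiag _ h2 _ h4 hv24)
    _ = √2 * q.diam * M2 := by ring
end
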